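/- arXiv:2304.03524 — 3 statements merged into one kernel-verified Lean document; each statement's English description precedes it below -/
import Mathlib

section
/- If a matrix Laurent polynomial A admits two Wiener-Hopf factorizations A = A₊ D A₋ = A₊' D' A₋', then the diagonal middle factors coincide: D = D'. In particular, the partial indices κ_1 ≥ ... ≥ κ_d of A are unique. -/
open Polynomial Matrix



private lemma whDetZeroBlock {d : ℕ} (M : Matrix (Fin d) (Fin d) ℂ) (r : Fin d)
    (h : ∀ i j : Fin d, j ≤ r → r ≤ i → M i j = 0) : M.det = 0 := by
  rw [Matrix.det_apply]
  refine Finset.sum_eq_zero fun σ _ => ?_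
  have hex : ∃ j : Fin d, j ≤ r ∧ r ≤ σ j := by
    by_contra hc
    push_neg at hc
    have hmaps : ∀ j ∈ Finset.Iic r, σ j ∈ Finset.Iio r := fun j hj =>
      Finset.mem_Iio.mpr (hc j (Finset.mem_Iic.mp hj))
    have hinj : Set.InjOn σ (Finset.Iic r) := fun a _ b _ hab => σ.injective hab
    have hcard := Finset.card_le_card_of_injOn σ hmaps hinj
    rw [Fin.card_Iic, Fin.card_Iio] at hcard
    omega
  obtain ⟨j, hjr, hrj⟩ := hex
  rw [Finset.prod_eq_zero (f := fun i => M (σ i) i) (Finset.mem_univ j)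
    (h (σ j) j hjr hrj)]
  simp

private lemma whEvalReflect (Mn : ℕ) (f : Polynomial ℂ) (hf : f.natDegree ≤ Mn) (z : ℂ)
    (hz : z ≠ 0) : (f.reflect Mn).eval z = z ^ Mn * f.eval z⁻¹ := by
  have hzi : z⁻¹ ≠ 0 := inv_ne_zero hz
  letI := invertibleOfNonzero hzi
  have h := Polynomial.eval₂_reflect_mul_pow (RingHom.id ℂ) z⁻¹ Mn f hf
  rw [invOf_eq_inv, inv_inv] at h
  have h2 : (reflect Mn f).eval z * z⁻¹ ^ Mn = f.eval z⁻¹ := by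
    simpa using h
  calc (reflect Mn f).eval z
      = (reflect Mn f).eval z * z⁻¹ ^ Mn * z ^ Mn := by
        rw [mul_assoc, inv_pow, inv_mul_cancel₀ (pow_ne_zero _ hz), mul_one]
    _ = z ^ Mn * f.eval z⁻¹ := by rw [h2]; ring

private lemma whEntryVanish (α β P Q : Polynomial ℂ) (k : ℕ) (hk : 0 < k)
    (hα : ∀ z : ℂ, ‖z‖ ≤ 1 → α.eval z ≠ 0)
    (hβ : ∀ z : ℂ, ‖z‖ ≤ 1 → β.eval z ≠ 0)
    (h : ∀ z : ℂ, z ≠ 0 →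
      β.eval z⁻¹ * P.eval z * z ^ k = α.eval z * Q.eval z⁻¹) : P = 0 := by
  set Mn := max β.natDegree Q.natDegree with hMn
  have hβM : β.natDegree ≤ Mn := le_max_left _ _
  have hQM : Q.natDegree ≤ Mn := le_max_right _ _
  set βh := β.reflect Mn with hβh
  set Qh := Q.reflect Mn with hQh
  -- basic facts
  have hβ0 : β.coeff 0 ≠ 0 := by
    rw [Polynomial.coeff_zero_eq_eval_zero]
    exact hβ 0 (by simp)
  have hα0 : α ≠ 0 := fun hc => hα 0 (by simp) (by rw [hc]; simp)
  have hβhM : βh.coeff Mn ≠ 0 := by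
    rwa [hβh, Polynomial.coeff_reflect, Polynomial.revAt_le (le_refl Mn), Nat.sub_self]
  have hβh_ne : βh ≠ 0 := fun hc => hβhM (by rw [hc]; simp)
  have hβh_deg : βh.natDegree = Mn := by
    refine le_antisymm ?_ (Polynomial.le_natDegree_of_ne_zero hβhM)
    rw [Polynomial.natDegree_le_iff_coeff_eq_zero]
    intro m hm
    rw [hβh, Polynomial.coeff_reflect, Polynomial.revAt_eq_self_of_lt hm]
    exact Polynomial.coeff_eq_zero_of_natDegree_lt (lt_of_le_of_lt hβM hm)
  have hQh_deg : Qh.natDegree ≤ Mn := by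
    rw [Polynomial.natDegree_le_iff_coeff_eq_zero]
    intro m hm
    rw [hQh, Polynomial.coeff_reflect, Polynomial.revAt_eq_self_of_lt hm]
    exact Polynomial.coeff_eq_zero_of_natDegree_lt (lt_of_le_of_lt hQM hm)
  -- polynomial identity
  have hid : X ^ k * P * βh = α * Qh := by
    have hroot : ∀ z : ℂ, z ≠ 0 → (X ^ k * P * βh - α * Qh).IsRoot z := by
      intro z hz
      have h1 := h z hz
      have h2 := whEvalReflect Mn β hβM z hz
      have h3 := whEvalReflect Mn Q hQM z hz
      simp only [Polynomial.IsRoot, Polynomial.eval_sub, Polynomial.eval_mul,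
        Polynomial.eval_pow, Polynomial.eval_X, ← hβh, ← hQh] at *
      rw [h2, h3]
      linear_combination z ^ Mn * h1
    have : (X ^ k * P * βh - α * Qh) = 0 := by
      apply Polynomial.eq_zero_of_infinite_isRoot
      apply Set.Infinite.mono (s := {z : ℂ | z ≠ 0})
      · exact fun z hz => hroot z hz
      · exact Set.Finite.infinite_compl (Set.finite_singleton (0 : ℂ))
    exact sub_eq_zero.mp this
  -- coprimality of α and X^k * βh
  have hcop : IsCoprime α (X ^ k * βh) := by
    rw [Polynomial.isCoprime_iff_aeval_ne_zero_of_isAlgClosed (k := ℂ) ℂ α (X ^ k * βh)]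
    intro z
    by_cases hz1 : ‖z‖ ≤ 1
    · left
      simpa [Polynomial.coe_aeval_eq_eval] using hα z hz1
    · right
      push_neg at hz1
      have hz : z ≠ 0 := by
        intro hc; rw [hc] at hz1; norm_num at hz1
      have hzinv : ‖z⁻¹‖ ≤ 1 := by
        rw [norm_inv]
        exact inv_le_one_of_one_le₀ hz1.le
      have hβval : βh.eval z ≠ 0 := by
        rw [hβh, whEvalReflect Mn β hβM z hz]
        exact mul_ne_zero (pow_ne_zero _ hz) (hβ z⁻¹ hzinv)
      have : (Polynomial.aeval z) (X ^ k * βh) = z ^ k * βh.eval z := by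
        simp [Polynomial.coe_aeval_eq_eval]
      rw [this]
      exact mul_ne_zero (pow_ne_zero _ hz) hβval
  -- divisibility
  have hdvd : α ∣ P * (X ^ k * βh) := by
    refine ⟨Qh, ?_⟩
    rw [← hid]; ring
  have hαP : α ∣ P := hcop.dvd_of_dvd_mul_right hdvd
  obtain ⟨R, hR⟩ := hαP
  -- cancel α
  have hcanc : X ^ k * R * βh = Qh := by
    have : α * (X ^ k * R * βh) = α * Qh := by
      rw [← hid, hR]; ring
    exact mul_left_cancel₀ hα0 this
  -- degree contradiction unless R = 0
  have hR0 : R = 0 := by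
    by_contra hR0
    have hX : (X : Polynomial ℂ) ^ k ≠ 0 := pow_ne_zero _ Polynomial.X_ne_zero
    have hdeg : (X ^ k * R * βh).natDegree = k + R.natDegree + Mn := by
      rw [Polynomial.natDegree_mul (mul_ne_zero hX hR0) hβh_ne,
        Polynomial.natDegree_mul hX hR0, Polynomial.natDegree_X_pow, hβh_deg]
    rw [hcanc] at hdeg
    omega
  rw [hR, hR0, mul_zero]




private lemma whSwap {d : ℕ} (Apz D Bmz Apz' D' Bmz' : Matrix (Fin d) (Fin d) ℂ)
    (E : Apz * D * Bmz = Apz' * D' * Bmz') :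
    Bmz.det • (Apz'.adjugate * Apz * D) = Apz'.det • (D' * (Bmz' * Bmz.adjugate)) := by
  calc Bmz.det • (Apz'.adjugate * Apz * D)
      = Apz'.adjugate * (Apz * D * Bmz) * Bmz.adjugate := by
        simp only [Matrix.mul_assoc, Matrix.mul_adjugate, mul_smul_comm, Matrix.mul_one]
    _ = Apz'.adjugate * (Apz' * D' * Bmz') * Bmz.adjugate := by rw [E]
    _ = Apz'.det • (D' * (Bmz' * Bmz.adjugate)) := by
        simp only [Matrix.mul_assoc]
        rw [← Matrix.mul_assoc Apz'.adjugate Apz', Matrix.adjugate_mul, smul_mul_assoc,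
          Matrix.one_mul]

private lemma whKey {d : ℕ}
    (Ap Bm Ap' Bm' : ℂ → Matrix (Fin d) (Fin d) ℂ) (κ κ' : Fin d → ℤ)
    (N N' : ℕ) (ap bm ap' bm' : ℕ → Matrix (Fin d) (Fin d) ℂ)
    (hκ : Antitone κ) (hκ' : Antitone κ')
    (hAp : ∀ z : ℂ, Ap z = ∑ r ∈ Finset.range N, z ^ r • ap r)
    (hBm : ∀ w : ℂ, Bm w = ∑ r ∈ Finset.range N, w ^ r • bm r)
    (hAp' : ∀ z : ℂ, Ap' z = ∑ r ∈ Finset.range N', z ^ r • ap' r)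
    (hBm' : ∀ w : ℂ, Bm' w = ∑ r ∈ Finset.range N', w ^ r • bm' r)
    (hApInv : ∀ z : ℂ, ‖z‖ ≤ 1 → IsUnit (Ap z))
    (hBmInv : ∀ w : ℂ, ‖w‖ ≤ 1 → IsUnit (Bm w))
    (hApInv' : ∀ z : ℂ, ‖z‖ ≤ 1 → IsUnit (Ap' z))
    (hBmInv' : ∀ w : ℂ, ‖w‖ ≤ 1 → IsUnit (Bm' w))
    (heq : ∀ z : ℂ, z ≠ 0 →
      Ap z * Matrix.diagonal (fun m => z ^ κ m) * Bm z⁻¹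
        = Ap' z * Matrix.diagonal (fun m => z ^ κ' m) * Bm' z⁻¹) :
    ∀ m : Fin d, κ m ≤ κ' m := by
  -- polynomial lifts of the matrix coefficient data
  set ApM : Matrix (Fin d) (Fin d) (Polynomial ℂ) :=
    ∑ r ∈ Finset.range N, (X : Polynomial ℂ) ^ r • (ap r).map C with hApM
  set BmM : Matrix (Fin d) (Fin d) (Polynomial ℂ) :=
    ∑ r ∈ Finset.range N, (X : Polynomial ℂ) ^ r • (bm r).map C with hBmM
  set ApM' : Matrix (Fin d) (Fin d) (Polynomial ℂ) :=
    ∑ r ∈ Finset.range N', (X : Polynomial ℂ) ^ r • (ap' r).map C with hApM'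
  set BmM' : Matrix (Fin d) (Fin d) (Polynomial ℂ) :=
    ∑ r ∈ Finset.range N', (X : Polynomial ℂ) ^ r • (bm' r).map C with hBmM'
  have hEval : ∀ (n : ℕ) (c : ℕ → Matrix (Fin d) (Fin d) ℂ) (z : ℂ),
      (∑ r ∈ Finset.range n, (X : Polynomial ℂ) ^ r • (c r).map C).map
          (⇑(Polynomial.evalRingHom z))
        = ∑ r ∈ Finset.range n, z ^ r • c r := by
    intro n c z
    ext i j
    simp only [Matrix.map_apply, Matrix.sum_apply, Matrix.smul_apply, smul_eq_mul,
      Polynomial.coe_evalRingHom, Polynomial.eval_finset_sum, Polynomial.eval_mul,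
      Polynomial.eval_pow, Polynomial.eval_X, Polynomial.eval_C]
  have hApE : ∀ z : ℂ, ApM.map (⇑(Polynomial.evalRingHom z)) = Ap z := by
    intro z; rw [hApM, hEval, ← hAp]
  have hBmE : ∀ w : ℂ, BmM.map (⇑(Polynomial.evalRingHom w)) = Bm w := by
    intro w; rw [hBmM, hEval, ← hBm]
  have hApE' : ∀ z : ℂ, ApM'.map (⇑(Polynomial.evalRingHom z)) = Ap' z := by
    intro z; rw [hApM', hEval, ← hAp']
  have hBmE' : ∀ w : ℂ, BmM'.map (⇑(Polynomial.evalRingHom w)) = Bm' w := by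
    intro w; rw [hBmM', hEval, ← hBm']
  set P : Matrix (Fin d) (Fin d) (Polynomial ℂ) := ApM'.adjugate * ApM with hP
  set Qm : Matrix (Fin d) (Fin d) (Polynomial ℂ) := BmM' * BmM.adjugate with hQm
  set αp : Polynomial ℂ := ApM'.det with hαp
  set βp : Polynomial ℂ := BmM.det with hβp
  -- evaluation of the lifted objects
  have hPE : ∀ z : ℂ, P.map (⇑(Polynomial.evalRingHom z)) = (Ap' z).adjugate * Ap z := by
    intro z
    rw [hP, Matrix.map_mul, hApE]
    congr 1
    have h := RingHom.map_adjugate (Polynomial.evalRingHom z) ApM'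
    rw [RingHom.mapMatrix_apply, RingHom.mapMatrix_apply] at h
    rw [h, hApE']
  have hQE : ∀ w : ℂ, Qm.map (⇑(Polynomial.evalRingHom w)) = Bm' w * (Bm w).adjugate := by
    intro w
    rw [hQm, Matrix.map_mul, hBmE']
    congr 1
    have h := RingHom.map_adjugate (Polynomial.evalRingHom w) BmM
    rw [RingHom.mapMatrix_apply, RingHom.mapMatrix_apply] at h
    rw [h, hBmE]
  have hαE : ∀ z : ℂ, αp.eval z = (Ap' z).det := by
    intro z
    have h := RingHom.map_det (Polynomial.evalRingHom z) ApM'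
    rw [RingHom.mapMatrix_apply, hApE'] at h
    exact h
  have hβE : ∀ w : ℂ, βp.eval w = (Bm w).det := by
    intro w
    have h := RingHom.map_det (Polynomial.evalRingHom w) BmM
    rw [RingHom.mapMatrix_apply, hBmE] at h
    exact h
  -- nonvanishing of the two scalar polynomials on the closed unit disk
  have hαNe : ∀ z : ℂ, ‖z‖ ≤ 1 → αp.eval z ≠ 0 := by
    intro z hz
    rw [hαE]
    exact ((Matrix.isUnit_iff_isUnit_det _).mp (hApInv' z hz)).ne_zero
  have hβNe : ∀ w : ℂ, ‖w‖ ≤ 1 → βp.eval w ≠ 0 := by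
    intro w hw
    rw [hβE]
    exact ((Matrix.isUnit_iff_isUnit_det _).mp (hBmInv w hw)).ne_zero
  -- the fundamental scalar identity
  have hscal : ∀ z : ℂ, z ≠ 0 → ∀ i j : Fin d,
      βp.eval z⁻¹ * ((P i j).eval z * z ^ κ j)
        = αp.eval z * (z ^ κ' i * (Qm i j).eval z⁻¹) := by
    intro z hz i j
    have E2 := whSwap (Ap z) (Matrix.diagonal fun m => z ^ κ m) (Bm z⁻¹) (Ap' z)
      (Matrix.diagonal fun m => z ^ κ' m) (Bm' z⁻¹) (heq z hz)
    have E3 := congrArg (fun M : Matrix (Fin d) (Fin d) ℂ => M i j) E2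
    simp only [Matrix.smul_apply, Matrix.mul_diagonal, Matrix.diagonal_mul,
      smul_eq_mul] at E3
    have e1 : (P i j).eval z = ((Ap' z).adjugate * Ap z) i j := by
      rw [← hPE z]; rfl
    have e2 : (Qm i j).eval z⁻¹ = (Bm' z⁻¹ * (Bm z⁻¹).adjugate) i j := by
      rw [← hQE z⁻¹]; rfl
    rw [e1, e2, hαE, hβE]
    exact E3
  -- entries of `P` vanish whenever κ j > κ' i
  have hPvanish : ∀ i j : Fin d, κ' i < κ j → P i j = 0 := by
    intro i j hij
    set k : ℕ := (κ j - κ' i).toNat with hkdef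
    have hkpos : 0 < k := by
      rw [hkdef]
      omega
    have hkz : (k : ℤ) = κ j - κ' i := by
      rw [hkdef]
      omega
    apply whEntryVanish αp βp (P i j) (Qm i j) k hkpos hαNe hβNe
    intro z hz
    have hs := hscal z hz i j
    have hzκ : z ^ κ' i ≠ 0 := zpow_ne_zero _ hz
    have hzk : (z : ℂ) ^ k = z ^ (κ j) / z ^ (κ' i) := by
      rw [← zpow_natCast, hkz, zpow_sub₀ hz]
    rw [hzk, div_eq_mul_inv]
    calc βp.eval z⁻¹ * (P i j).eval z * (z ^ κ j * (z ^ κ' i)⁻¹)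
        = βp.eval z⁻¹ * ((P i j).eval z * z ^ κ j) * (z ^ κ' i)⁻¹ := by ring
      _ = αp.eval z * (z ^ κ' i * (Qm i j).eval z⁻¹) * (z ^ κ' i)⁻¹ := by rw [hs]
      _ = αp.eval z * (Qm i j).eval z⁻¹ * (z ^ κ' i * (z ^ κ' i)⁻¹) := by ring
      _ = αp.eval z * (Qm i j).eval z⁻¹ := by rw [mul_inv_cancel₀ hzκ, mul_one]
  -- now derive the conclusion
  intro m
  by_contra hlt
  push_neg at hlt
  -- the evaluated matrix at 0 has a large zero block
  have hP0 : ∀ i j : Fin d, j ≤ m → m ≤ i → ((Ap' 0).adjugate * Ap 0) i j = 0 := by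
    intro i j hjm hmi
    have hv : P i j = 0 := hPvanish i j (lt_of_le_of_lt (hκ' hmi) (lt_of_lt_of_le hlt (hκ hjm)))
    have : ((Ap' 0).adjugate * Ap 0) i j = (P i j).eval 0 := by
      rw [← hPE 0]; rfl
    rw [this, hv]
    simp
  have hdet0 : ((Ap' 0).adjugate * Ap 0).det = 0 := whDetZeroBlock _ m hP0
  have habs0 : ‖(0 : ℂ)‖ ≤ 1 := by simp
  have hdetA : IsUnit (Ap 0).det := (Matrix.isUnit_iff_isUnit_det _).mp (hApInv 0 habs0)
  have hdetA' : IsUnit (Ap' 0).det := (Matrix.isUnit_iff_isUnit_det _).mp (hApInv' 0 habs0)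
  rw [Matrix.det_mul, Matrix.det_adjugate] at hdet0
  exact ((hdetA'.pow _).mul hdetA).ne_zero hdet0


/-- Uniqueness of the middle factor in a Wiener–Hopf factorization: if a matrix
Laurent polynomial `A` admits two Wiener–Hopf factorizations
`A = A₊ D A₋ = A₊' D' A₋'` (with the side factors matrix polynomials in `z`,
resp. `z⁻¹`, invertible on the closed unit disk, resp. for `|z⁻¹| ≤ 1`, and the
middle factors `D(z) = diag(z^{κ₁},…,z^{κ_d})`, `D'(z) = diag(z^{κ'₁},…,z^{κ'_d})`
with non-increasing integer exponents), then `D = D'`; in particular the partial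
indices are unique: `κ = κ'`. -/
theorem wienerHopf_partial_indices_unique {d : ℕ}
    (p q : ℤ) (a : ℤ → Matrix (Fin d) (Fin d) ℂ)
    (A Ap Bm Ap' Bm' : ℂ → Matrix (Fin d) (Fin d) ℂ) (κ κ' : Fin d → ℤ)
    (N N' : ℕ) (ap bm ap' bm' : ℕ → Matrix (Fin d) (Fin d) ℂ)
    (hκ : Antitone κ) (hκ' : Antitone κ')
    (hA : ∀ z : ℂ, z ≠ 0 → A z = ∑ r ∈ Finset.Icc p q, z ^ r • a r)
    (hAp : ∀ z : ℂ, Ap z = ∑ r ∈ Finset.range N, z ^ r • ap r)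
    (hBm : ∀ w : ℂ, Bm w = ∑ r ∈ Finset.range N, w ^ r • bm r)
    (hAp' : ∀ z : ℂ, Ap' z = ∑ r ∈ Finset.range N', z ^ r • ap' r)
    (hBm' : ∀ w : ℂ, Bm' w = ∑ r ∈ Finset.range N', w ^ r • bm' r)
    (hApInv : ∀ z : ℂ, ‖z‖ ≤ 1 → IsUnit (Ap z))
    (hBmInv : ∀ w : ℂ, ‖w‖ ≤ 1 → IsUnit (Bm w))
    (hApInv' : ∀ z : ℂ, ‖z‖ ≤ 1 → IsUnit (Ap' z))
    (hBmInv' : ∀ w : ℂ, ‖w‖ ≤ 1 → IsUnit (Bm' w))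
    (hfact : ∀ z : ℂ, z ≠ 0 →
      A z = Ap z * Matrix.diagonal (fun m => z ^ κ m) * Bm z⁻¹)
    (hfact' : ∀ z : ℂ, z ≠ 0 →
      A z = Ap' z * Matrix.diagonal (fun m => z ^ κ' m) * Bm' z⁻¹) :
    κ = κ' ∧ ∀ z : ℂ, z ≠ 0 →
      Matrix.diagonal (fun m => z ^ κ m) = Matrix.diagonal (fun m => z ^ κ' m) := by
  have heq : ∀ z : ℂ, z ≠ 0 →
      Ap z * Matrix.diagonal (fun m => z ^ κ m) * Bm z⁻¹
        = Ap' z * Matrix.diagonal (fun m => z ^ κ' m) * Bm' z⁻¹ := fun z hz =>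
    (hfact z hz).symm.trans (hfact' z hz)
  have h1 := whKey Ap Bm Ap' Bm' κ κ' N N' ap bm ap' bm' hκ hκ' hAp hBm hAp' hBm'
    hApInv hBmInv hApInv' hBmInv' heq
  have h2 := whKey Ap' Bm' Ap Bm κ' κ N' N ap' bm' ap bm hκ' hκ hAp' hBm' hAp hBm
    hApInv' hBmInv' hApInv hBmInv (fun z hz => (heq z hz).symm)
  have hkk : κ = κ' := funext fun m => le_antisymm (h1 m) (h2 m)
  exact ⟨hkk, fun z _ => by rw [hkk]⟩
end

section
/- Let H₀ be a bounded operator with a reflexive generalized inverse H₀^{(-1)} (i.e., H₀^{(-1)} H₀ H₀^{(-1)} = H₀^{(-1)} and H₀ H₀^{(-1)} H₀ = H₀). If W is a bounded operator with ‖W‖ < 1/‖H₀^{(-1)}‖, then dim Ker(H₀ + W) ≤ dim Ker H₀, and Ker H₀^{(-1)}(H₀+W) = (1 + H₀^{(-1)} W)⁻¹ Ker H₀. -/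
/-- Let `H₀` be a bounded operator with a reflexive generalized inverse `H₀⁽⁻¹⁾`
(`H₀⁽⁻¹⁾ H₀ H₀⁽⁻¹⁾ = H₀⁽⁻¹⁾` and `H₀ H₀⁽⁻¹⁾ H₀ = H₀`). If `W` is a bounded operator
with `‖W‖ < 1/‖H₀⁽⁻¹⁾‖`, then `dim Ker(H₀ + W) ≤ dim Ker H₀`, and
`Ker H₀⁽⁻¹⁾(H₀ + W) = (1 + H₀⁽⁻¹⁾ W)⁻¹ Ker H₀` (the operator `1 + H₀⁽⁻¹⁾W` being
invertible by the norm assumption). -/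
theorem ker_dim_le_of_small_perturbation
    {E : Type*} [NormedAddCommGroup E] [InnerProductSpace ℂ E] [CompleteSpace E]
    (H₀ Hinv W : E →L[ℂ] E)
    (hg1 : Hinv ∘L H₀ ∘L Hinv = Hinv) (hg2 : H₀ ∘L Hinv ∘L H₀ = H₀)
    (hW : ‖W‖ < 1 / ‖Hinv‖) :
    Module.rank ℂ (LinearMap.ker ((H₀ + W : E →L[ℂ] E) : E →ₗ[ℂ] E)) ≤ Module.rank ℂ (LinearMap.ker (H₀ : E →ₗ[ℂ] E)) ∧
    ∃ B : E →L[ℂ] E,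
      B ∘L (1 + Hinv ∘L W) = 1 ∧ (1 + Hinv ∘L W) ∘L B = 1 ∧
      LinearMap.ker ((Hinv ∘L (H₀ + W) : E →L[ℂ] E) : E →ₗ[ℂ] E) = (LinearMap.ker (H₀ : E →ₗ[ℂ] E)).map (B : E →ₗ[ℂ] E) := by
  have hHinv : 0 < ‖Hinv‖ := by
    by_contra h
    push_neg at h
    have : ‖Hinv‖ = 0 := le_antisymm h (norm_nonneg _)
    rw [this] at hW
    simp at hW
    exact absurd hW (not_lt.mpr (norm_nonneg _))
  have hsmall : ‖Hinv ∘L W‖ < 1 := by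
    calc ‖Hinv ∘L W‖ ≤ ‖Hinv‖ * ‖W‖ := ContinuousLinearMap.opNorm_comp_le _ _
    _ < ‖Hinv‖ * (1 / ‖Hinv‖) := by exact mul_lt_mul_of_pos_left hW hHinv
    _ = 1 := by field_simp
  have hsmall' : ‖-(Hinv ∘L W)‖ < 1 := by rwa [norm_neg]
  set u : (E →L[ℂ] E)ˣ := Units.oneSub _ hsmall' with hu
  have huval : (u : E →L[ℂ] E) = 1 + Hinv ∘L W := by
    simp [hu, Units.oneSub, sub_neg_eq_add]
  set A : E →L[ℂ] E := 1 + Hinv ∘L W with hA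
  set B : E →L[ℂ] E := ↑u⁻¹ with hB
  have hBA : B ∘L A = 1 := by
    rw [← huval]; exact u.inv_mul
  have hAB : A ∘L B = 1 := by
    rw [← huval]; exact u.mul_inv
  -- key identity: Hinv ∘ (H₀ + W) = (Hinv ∘ H₀) ∘ A
  have hkey : Hinv ∘L (H₀ + W) = (Hinv ∘L H₀) ∘L A := by
    have : (Hinv ∘L H₀) ∘L (Hinv ∘L W) = Hinv ∘L W := by
      rw [← ContinuousLinearMap.comp_assoc, ContinuousLinearMap.comp_assoc Hinv H₀ Hinv, hg1]
    rw [hA, ContinuousLinearMap.comp_add, ContinuousLinearMap.comp_add, this]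
    simp [ContinuousLinearMap.one_def]
  -- Ker(Hinv H₀) = Ker H₀
  have hkerH : LinearMap.ker ((Hinv ∘L H₀ : E →L[ℂ] E) : E →ₗ[ℂ] E) = LinearMap.ker (H₀ : E →ₗ[ℂ] E) := by
    ext x
    simp only [LinearMap.mem_ker, ContinuousLinearMap.coe_comp',
      Function.comp_apply, ContinuousLinearMap.coe_coe]
    constructor
    · intro h
      have := congrArg (fun f : E →L[ℂ] E => f x) hg2
      simp only [ContinuousLinearMap.comp_apply] at this
      rw [← this, h, map_zero]
    · intro h
      rw [h, map_zero]
  have hkermap : LinearMap.ker ((Hinv ∘L (H₀ + W) : E →L[ℂ] E) : E →ₗ[ℂ] E) = (LinearMap.ker (H₀ : E →ₗ[ℂ] E)).map (B : E →ₗ[ℂ] E) := by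
    ext x
    constructor
    · intro hx
      refine ⟨A x, ?_, ?_⟩
      · rw [← hkerH]
        have hx' : (Hinv ∘L (H₀ + W)) x = 0 := hx
        rw [hkey] at hx'
        exact hx'
      · have := congrArg (fun f : E →L[ℂ] E => f x) hBA
        simpa using this
    · rintro ⟨y, hy, rfl⟩
      have hy0 : H₀ y = 0 := hy
      have hy' : (Hinv ∘L H₀) y = 0 := by simp [hy0]
      have hABy : A (B y) = y := by
        have := congrArg (fun f : E →L[ℂ] E => f y) hAB
        simpa using this
      show (Hinv ∘L (H₀ + W)) (B y) = 0
      rw [hkey]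
      simp only [ContinuousLinearMap.comp_apply]
      rw [hABy]
      simpa using hy'
  refine ⟨?_, B, hBA, hAB, hkermap⟩
  -- rank inequality
  have hsub : LinearMap.ker ((H₀ + W : E →L[ℂ] E) : E →ₗ[ℂ] E) ≤ LinearMap.ker ((Hinv ∘L (H₀ + W) : E →L[ℂ] E) : E →ₗ[ℂ] E) := by
    intro x hx
    have : (H₀ + W) x = 0 := hx
    show (Hinv ∘L (H₀ + W)) x = 0
    rw [ContinuousLinearMap.comp_apply, this, map_zero]
  have hBinj : Function.Injective B := by
    intro a b hab
    have ha := congrArg (fun f : E →L[ℂ] E => f a) hAB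
    have hb := congrArg (fun f : E →L[ℂ] E => f b) hAB
    simp only [ContinuousLinearMap.comp_apply, ContinuousLinearMap.one_apply] at ha hb
    rw [← ha, ← hb, hab]
  calc Module.rank ℂ (LinearMap.ker ((H₀ + W : E →L[ℂ] E) : E →ₗ[ℂ] E))
      ≤ Module.rank ℂ (LinearMap.ker ((Hinv ∘L (H₀ + W) : E →L[ℂ] E) : E →ₗ[ℂ] E)) := Submodule.rank_mono hsub
    _ = Module.rank ℂ ((LinearMap.ker (H₀ : E →ₗ[ℂ] E)).map (B : E →ₗ[ℂ] E)) := by rw [hkermap]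
    _ = Module.rank ℂ (LinearMap.ker (H₀ : E →ₗ[ℂ] E)) :=
        ((Submodule.equivMapOfInjective (B : E →ₗ[ℂ] E) hBinj _).symm).rank_eq
end

section
/- Let H₀ be a bounded self-adjoint operator with reflexive generalized inverse H₀^{(-1)}, let w be a bounded operator with ‖w‖ = 1, and let λ > 0 satisfy λ < 1/(2 ‖H₀‖ ‖H₀^{(-1)}‖). Suppose |φ⟩ is a unit vector in Ker(H₀ + λw) and |ψ⟩ = (1 + λ H₀^{(-1)} w)|φ⟩ / ‖(1 + λ H₀^{(-1)} w)|φ⟩‖ (well-defined since the operator is invertible). Then 1 − |⟨φ|ψ⟩|² ≤ λ² κ² / (1 − 2λκ), where κ = ‖H₀‖ ‖H₀^{(-1)}‖ and assuming ‖H₀‖ = 1. -/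
set_option maxHeartbeats 1000000


/-- Sensitivity bound for zero modes. Let `H₀` be a bounded self-adjoint operator with
reflexive generalized inverse `H₀⁽⁻¹⁾`, `w` a perturbation of unit norm, `‖H₀‖ = 1`,
and `κ = ‖H₀‖‖H₀⁽⁻¹⁾‖` the generalized condition number. For `0 < λ < 1/(2κ)`, a unit
vector `|φ⟩ ∈ Ker(H₀ + λw)`, and `|ψ⟩ = (1 + λH₀⁽⁻¹⁾w)|φ⟩ / ‖(1 + λH₀⁽⁻¹⁾w)|φ⟩‖`,
one has `1 - |⟨φ|ψ⟩|² ≤ λ²κ²/(1 - 2λκ)`. -/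
theorem sensitivity_bound
    {E : Type*} [NormedAddCommGroup E] [InnerProductSpace ℂ E] [CompleteSpace E]
    (H₀ Hinv w : E →L[ℂ] E) (hsa : IsSelfAdjoint H₀)
    (hg1 : Hinv ∘L H₀ ∘L Hinv = Hinv) (hg2 : H₀ ∘L Hinv ∘L H₀ = H₀)
    (hw : ‖w‖ = 1) (hH₀ : ‖H₀‖ = 1)
    (lam : ℝ) (hlam0 : 0 < lam) (hlam : lam < 1 / (2 * (‖H₀‖ * ‖Hinv‖)))
    (φ : E) (hφ : ‖φ‖ = 1) (hker : (H₀ + (lam : ℂ) • w) φ = 0) :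
    let ψ : E := (‖(1 + (lam : ℂ) • (Hinv ∘L w)) φ‖⁻¹ : ℝ) •
      (1 + (lam : ℂ) • (Hinv ∘L w)) φ
    1 - ‖(inner ℂ φ ψ : ℂ)‖ ^ 2 ≤
      lam ^ 2 * (‖H₀‖ * ‖Hinv‖) ^ 2 / (1 - 2 * lam * (‖H₀‖ * ‖Hinv‖)) := by
  intro ψ
  set κ := ‖H₀‖ * ‖Hinv‖ with hκdef
  have hκpos : 0 < κ := by
    rcases (lt_or_eq_of_le (norm_nonneg Hinv)) with h | h
    · rw [hκdef, hH₀]; simpa using h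
    · exfalso
      rw [hκdef, hH₀, ← h] at hlam
      norm_num at hlam
      linarith
  have hK1 : 2 * (lam * κ) < 1 := by
    rw [lt_div_iff₀ (by positivity)] at hlam
    linarith
  set v : E := ((lam : ℂ) • (Hinv ∘L w)) φ with hvdef
  have hu : (1 + (lam : ℂ) • (Hinv ∘L w)) φ = φ + v := by
    simp [hvdef]
  have hψ : ψ = (‖φ + v‖⁻¹ : ℝ) • (φ + v) := by
    show (‖(1 + (lam : ℂ) • (Hinv ∘L w)) φ‖⁻¹ : ℝ) •
      (1 + (lam : ℂ) • (Hinv ∘L w)) φ = _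
    rw [hu]
  set a : ℂ := inner ℂ φ v with hadef
  set e := ‖v‖ with hedef
  have he0 : 0 ≤ e := norm_nonneg v
  have he : e ≤ lam * κ := by
    have h1 : ‖((lam : ℂ) • (Hinv ∘L w)) φ‖ ≤ ‖(lam : ℂ) • (Hinv ∘L w)‖ * ‖φ‖ :=
      ContinuousLinearMap.le_opNorm _ _
    have h2 : ‖(lam : ℂ) • (Hinv ∘L w)‖ = lam * ‖Hinv ∘L w‖ := by
      rw [norm_smul]
      simp [abs_of_pos hlam0]
    have h3 : ‖Hinv ∘L w‖ ≤ ‖Hinv‖ * ‖w‖ := ContinuousLinearMap.opNorm_comp_le _ _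
    rw [hedef, hvdef]
    calc ‖((lam : ℂ) • (Hinv ∘L w)) φ‖ ≤ ‖(lam : ℂ) • (Hinv ∘L w)‖ * ‖φ‖ := h1
      _ = lam * ‖Hinv ∘L w‖ := by rw [h2, hφ, mul_one]
      _ ≤ lam * (‖Hinv‖ * ‖w‖) := by nlinarith
      _ = lam * κ := by rw [hκdef, hH₀, hw]; ring
  -- inner product with ψ
  have hinner : (inner ℂ φ (φ + v) : ℂ) = 1 + a := by
    rw [inner_add_right, ← hadef, inner_self_eq_norm_sq_to_K, hφ]
    norm_num
  set D := ‖φ + v‖ with hDdef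
  set N := ‖(1 + a : ℂ)‖ with hNdef
  have hnormip : ‖(inner ℂ φ ψ : ℂ)‖ = D⁻¹ * N := by
    rw [hψ, RCLike.real_smul_eq_coe_smul (K := ℂ), inner_smul_right, norm_mul,
      hinner, ← hNdef, RCLike.norm_ofReal,
      abs_of_nonneg (inv_nonneg.mpr (norm_nonneg (φ + v)))]
  set r := a.re with hrdef
  set s := a.im with hsdef
  have hD2 : D ^ 2 = 1 + 2 * r + e ^ 2 := by
    rw [hDdef, @norm_add_sq ℂ, hφ, ← hadef]
    simp [hedef, hrdef]
  have hN2 : N ^ 2 = (1 + r) ^ 2 + s ^ 2 := by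
    rw [hNdef, Complex.sq_norm, Complex.normSq_apply]
    simp [hrdef, hsdef]
    ring
  have hcs : r ^ 2 + s ^ 2 ≤ e ^ 2 := by
    have h1 : ‖a‖ ≤ ‖φ‖ * ‖v‖ := norm_inner_le_norm (𝕜 := ℂ) φ v
    have h2 : ‖a‖ ^ 2 = r ^ 2 + s ^ 2 := by
      rw [Complex.sq_norm, Complex.normSq_apply]; ring
    rw [hφ, one_mul, ← hedef] at h1
    nlinarith [norm_nonneg a]
  have hre : -e ≤ r := by
    have h1 : |r| ≤ ‖a‖ := by
      exact Complex.abs_re_le_norm a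
    have h2 : ‖a‖ ≤ e := by
      have := norm_inner_le_norm (𝕜 := ℂ) φ v
      rwa [hφ, one_mul, ← hedef, ← hadef] at this
    have := abs_le.mp (h1.trans h2)
    linarith [this.1]
  have hden : (0 : ℝ) < 1 - 2 * lam * κ := by linarith
  have hD2lb : 1 - 2 * lam * κ ≤ D ^ 2 := by nlinarith
  have hD2pos : 0 < D ^ 2 := lt_of_lt_of_le hden hD2lb
  have hDpos : 0 < D := by
    rcases (norm_nonneg (φ + v)).lt_or_eq with h | h
    · exact h
    · exfalso
      rw [hDdef, ← h] at hD2pos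
      norm_num at hD2pos
  clear_value κ v a e D N r s
  rw [hnormip]
  have hgoal_eq : 1 - (D⁻¹ * N) ^ 2 = (D ^ 2 - N ^ 2) / D ^ 2 := by
    field_simp
  rw [hgoal_eq]
  have hnum : D ^ 2 - N ^ 2 ≤ lam ^ 2 * κ ^ 2 := by
    have h1 : D ^ 2 - N ^ 2 = e ^ 2 - (r ^ 2 + s ^ 2) := by rw [hD2, hN2]; ring
    have h2 : e ^ 2 ≤ (lam * κ) ^ 2 := by nlinarith
    nlinarith
  calc (D ^ 2 - N ^ 2) / D ^ 2 ≤ (lam ^ 2 * κ ^ 2) / (1 - 2 * lam * κ) :=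
        div_le_div₀ (by positivity) hnum hden hD2lb
    _ = lam ^ 2 * κ ^ 2 / (1 - 2 * lam * κ) := rfl
end
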